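/- arXiv:1212.1795 — 2 statements merged into one kernel-verified Lean document; each statement's English description precedes it below -/
import Mathlib

section
/- For fixed reals u, v and a fixed positive integer m, the quantity (2π/(mn)) · s_n((2π/(mn)) u + v) converges as n → ∞ to 0 if v is not a multiple of 2π, and to (1/m) · q(u/m) if v is a multiple of 2π, where q(u) = sin(πu)/(πu) with q(0) = 1. -/
open Real Filter MeasureTheory

/-- The kernel `s_n(u) = (1/(2π)) · sin(nu/2)/sin(u/2)`, extended by continuity at the
multiples of `2π` (where it takes the value `±n/(2π)`), via the Dirichlet-kernel cosine sum. -/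
noncomputable def sn (n : ℕ) (u : ℝ) : ℝ :=
  if Real.sin (u / 2) = 0 then
    (1 / (2 * Real.pi)) * ∑ j ∈ Finset.range n, Real.cos (((j : ℝ) - ((n : ℝ) - 1) / 2) * u)
  else (1 / (2 * Real.pi)) * Real.sin ((n : ℝ) * u / 2) / Real.sin (u / 2)
/-- The sine kernel `q(u) = sin(πu)/(πu)`, with `q(0) = 1`. -/
noncomputable def sineq (u : ℝ) : ℝ :=
  if u = 0 then 1 else Real.sin (Real.pi * u) / (Real.pi * u)

open Topology

/-!
Where `sin (v / 2) ≠ 0`, `sn n w = sin (n w / 2) / (2π sin (w / 2))` stays bounded in `n` for `w`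
near `v`, so the factor `2π / (m n)` sends the product to `0`. At `v = 0`, putting `x = π u / m`,
the scaled kernel is `(1 / n) · sn n (2x / n) = sinc x / (2π sinc (x / n))`, which tends to
`sinc x / (2π)` by continuity of `sinc`; the extra factor `2π / m` turns this into `q (u / m) / m`.
-/

lemma sn_of_sin_ne_zero {u : ℝ} (h : sin (u / 2) ≠ 0) (n : ℕ) :
    sn n u = sin (n * u / 2) / (2 * π * sin (u / 2)) := by
  rw [sn, if_neg h]
  field_simp

lemma sn_zero (n : ℕ) : sn n 0 = n / (2 * π) := by
  simp [sn, div_eq_inv_mul]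

lemma sineq_eq_sinc (u : ℝ) : sineq u = sinc (π * u) := by
  simp [sineq, sinc, pi_ne_zero]

lemma tendsto_mul_sn_of_sin_ne_zero {ε w : ℕ → ℝ} {v : ℝ} (hε : Tendsto ε atTop (𝓝 0))
    (hw : Tendsto w atTop (𝓝 v)) (hv : sin (v / 2) ≠ 0) :
    Tendsto (fun n => ε n * sn n (w n)) atTop (𝓝 0) := by
  have hsin : Tendsto (fun n => sin (w n / 2)) atTop (𝓝 (sin (v / 2))) :=
    (continuous_sin.tendsto _).comp (hw.div_const 2)
  have hosc : Tendsto (fun n => ε n * sin (n * w n / 2)) atTop (𝓝 0) :=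
    hε.zero_mul_isBoundedUnder_le (isBoundedUnder_of ⟨1, fun n => abs_sin_le_one _⟩)
  have hden := (hsin.const_mul (2 * π)).inv₀ (mul_ne_zero two_pi_pos.ne' hv)
  simpa using (hosc.mul hden).congr' <| by
    filter_upwards [hsin.eventually_ne hv] with n hn
    rw [sn_of_sin_ne_zero hn]
    ring

lemma inv_mul_sn_two_mul_div (x : ℝ) {n : ℕ} (hn : n ≠ 0) (h : sinc (x / n) ≠ 0) :
    (n : ℝ)⁻¹ * sn n (2 * x / n) = sinc x / (2 * π * sinc (x / n)) := by
  have hn' : (n : ℝ) ≠ 0 := Nat.cast_ne_zero.mpr hn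
  rcases eq_or_ne x 0 with rfl | hx
  · simp only [mul_zero, zero_div, sn_zero, sinc_zero, mul_one]
    field_simp
  · have hxn : x / n ≠ 0 := div_ne_zero hx hn'
    rw [sinc_of_ne_zero hxn] at h ⊢
    have harg : 2 * x / n / 2 = x / n := by ring
    have hsin : sin (2 * x / n / 2) ≠ 0 := harg ▸ left_ne_zero_of_mul h
    have hnx : (n : ℝ) * (2 * x / n) / 2 = x := by field_simp
    rw [sn_of_sin_ne_zero hsin, sinc_of_ne_zero hx, hnx, harg]
    field_simp

lemma tendsto_inv_mul_sn_two_mul_div (x : ℝ) :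
    Tendsto (fun n : ℕ => (n : ℝ)⁻¹ * sn n (2 * x / n)) atTop (𝓝 (sinc x / (2 * π))) := by
  have hs : Tendsto (fun n : ℕ => sinc (x / n)) atTop (𝓝 1) :=
    sinc_zero ▸ (continuous_sinc.tendsto 0).comp (tendsto_const_div_atTop_nhds_zero_nat x)
  have hlim := (tendsto_const_nhds (x := sinc x)).div (hs.const_mul (2 * π)) (by positivity)
  rw [mul_one] at hlim
  refine hlim.congr' ?_
  filter_upwards [eventually_ne_atTop 0, hs.eventually_ne one_ne_zero] with n hn hsinc
  exact (inv_mul_sn_two_mul_div x hn hsinc).symm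

theorem tendsto_scaled_sn_shift_general (m : ℕ) (u v : ℝ) :
    ((¬ ∃ j : ℤ, v = 2 * Real.pi * j) →
      Tendsto (fun n : ℕ => 2 * Real.pi / (m * n) * sn n (2 * Real.pi / (m * n) * u + v))
        atTop (nhds 0)) ∧
    (v = 0 →
      Tendsto (fun n : ℕ => 2 * Real.pi / (m * n) * sn n (2 * Real.pi / (m * n) * u + v))
        atTop (nhds ((1 / m) * sineq (u / m)))) := by
  refine ⟨fun hv => ?_, fun hv => ?_⟩
  · have hε : Tendsto (fun n : ℕ => 2 * π / (m * n)) atTop (𝓝 0) := by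
      simpa only [div_mul_eq_div_div] using tendsto_const_div_atTop_nhds_zero_nat (2 * π / m)
    refine tendsto_mul_sn_of_sin_ne_zero hε (by simpa using (hε.mul_const u).add_const v) ?_
    rw [Ne, sin_eq_zero_iff]
    rintro ⟨k, hk⟩
    exact hv ⟨k, by linarith⟩
  · subst hv
    convert (tendsto_inv_mul_sn_two_mul_div (π * u / m)).const_mul (2 * π / m) using 2 with n
    · rw [show 2 * π / (m * n) * u + 0 = 2 * (π * u / m) / n by ring]
      ring
    · rw [sineq_eq_sinc]
      field_simp

/-- For fixed reals `u, v` and a fixed positive integer `m`,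
`(2π/(mn)) · s_n((2π/(mn)) u + v)` converges as `n → ∞` to `0` if `v` is not a multiple
of `2π`, and (in the case `v = 0` of a multiple of `2π`) to `(1/m) q(u/m)`. -/
theorem tendsto_scaled_sn_shift (m : ℕ) (hm : 0 < m) (u v : ℝ) :
    ((¬ ∃ j : ℤ, v = 2 * Real.pi * j) →
      Tendsto (fun n : ℕ => 2 * Real.pi / (m * n) * sn n (2 * Real.pi / (m * n) * u + v))
        atTop (nhds 0)) ∧
    (v = 0 →
      Tendsto (fun n : ℕ => 2 * Real.pi / (m * n) * sn n (2 * Real.pi / (m * n) * u + v))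
        atTop (nhds ((1 / m) * sineq (u / m)))) :=
  tendsto_scaled_sn_shift_general m u v
end

section
/- Let σ, τ be permutations of {1,…,k}, not both the identity. Fix z ∈ ℝ^k and η ∈ {0,1}^k, and for x ∈ [0,2π]^k set y_i = y_i(m,n) = (2π/(mn)) z_i − x_i + 2πη_i + π. Then for Lebesgue-almost every x ∈ [0,2π]^k, the product Π_{i=1}^k (2π/m) s_m(x_i − x_σ(i)) · (2π/n) s_n(y_i − y_τ(i)) tends to 0 as m, n → ∞, and it is uniformly bounded by 1. -/
/-!
The factor `(2π/n) s_n(u)` equals `sin (n u/2) / (n sin (u/2))` away from `2πℤ`, so it is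
bounded by `1` everywhere and is `O(1/n)` locally uniformly off `2πℤ`. Off a null set, no
difference `x_i − x_j` with `i ≠ j` lies in `2πℤ`. If `σ i ≠ i`, the factor
`(2π/m) s_m(x_i − x_{σ i})` is then `O(1/m)`; if `τ i ≠ i`, the argument `y_i − y_{τ i}` converges
to `x_{τ i} − x_i` modulo `2πℤ` (this is where `η ∈ {0,1}^k` enters), so the factor
`(2π/n) s_n(y_i − y_{τ i})` is `O(1/n)`. All the other factors are bounded by `1`.
-/

open Real Filter MeasureTheory

/-- The change of variables `y_i = (2π/(mn)) z_i − x_i + 2πη_i + π`. -/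
noncomputable def yfun {k : ℕ} (z η : Fin k → ℝ) (m n : ℕ) (x : Fin k → ℝ) (i : Fin k) : ℝ :=
  2 * Real.pi / (m * n) * z i - x i + 2 * Real.pi * η i + Real.pi

open Topology

lemma abs_sin_nat_mul_le (n : ℕ) (t : ℝ) : |sin (n * t)| ≤ n * |sin t| := by
  induction n with
  | zero => simp
  | succ n ih =>
    calc |sin (((n + 1 : ℕ) : ℝ) * t)| = |sin (n * t) * cos t + cos (n * t) * sin t| := by
          push_cast; rw [add_mul, one_mul, sin_add]
      _ ≤ |sin (n * t)| * |cos t| + |cos (n * t)| * |sin t| := by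
          rw [← abs_mul, ← abs_mul]; exact abs_add_le _ _
      _ ≤ n * |sin t| * 1 + 1 * |sin t| := by
          gcongr <;> first | exact ih | exact abs_cos_le_one _
      _ = ((n + 1 : ℕ) : ℝ) * |sin t| := by push_cast; ring

lemma two_pi_div_mul_sn_of_sin_ne_zero (n : ℕ) {u : ℝ} (hu : sin (u / 2) ≠ 0) :
    2 * π / n * sn n u = sin (n * (u / 2)) / (n * sin (u / 2)) := by
  rw [sn, if_neg hu]
  field_simp

lemma abs_two_pi_div_mul_sn_le_one (n : ℕ) (u : ℝ) : |2 * π / n * sn n u| ≤ 1 := by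
  rcases Nat.eq_zero_or_pos n with rfl | hn
  · simp
  have hn' : (0 : ℝ) < n := Nat.cast_pos.2 hn
  by_cases hu : sin (u / 2) = 0
  · have hsum : |∑ j ∈ Finset.range n, cos ((j - (n - 1) / 2 : ℝ) * u)| ≤ n :=
      (Finset.abs_sum_le_sum_abs _ _).trans <|
        (Finset.sum_le_card_nsmul _ _ 1 fun _ _ => abs_cos_le_one _).trans_eq (by simp)
    rw [sn, if_pos hu, ← mul_assoc, abs_mul, div_mul_div_comm, mul_one, mul_comm (n : ℝ),
      div_mul_cancel_left₀ (by positivity), abs_inv, abs_of_pos hn', inv_mul_le_iff₀ hn', mul_one]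
    exact hsum
  · rw [two_pi_div_mul_sn_of_sin_ne_zero n hu, abs_div, abs_mul, abs_of_pos hn',
      div_le_one (by positivity)]
    exact abs_sin_nat_mul_le n (u / 2)

lemma abs_two_pi_div_mul_sn_le (n : ℕ) {u : ℝ} (hu : sin (u / 2) ≠ 0) :
    |2 * π / n * sn n u| ≤ 1 / (n * |sin (u / 2)|) := by
  rw [two_pi_div_mul_sn_of_sin_ne_zero n hu, abs_div, abs_mul, Nat.abs_cast]
  gcongr
  exact abs_sin_le_one _

lemma tendsto_two_pi_div_mul_sn_zero {α : Type*} {l : Filter α} {N : α → ℕ}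
    (hN : Tendsto N l atTop) {u : α → ℝ} {u₀ : ℝ} (hu : Tendsto u l (𝓝 u₀))
    (hu₀ : sin (u₀ / 2) ≠ 0) :
    Tendsto (fun a => 2 * π / N a * sn (N a) (u a)) l (𝓝 0) := by
  set c := |sin (u₀ / 2)|
  have hc : 0 < c := abs_pos.2 hu₀
  have hsin : ∀ᶠ a in l, c / 2 < |sin (u a / 2)| :=
    (((continuous_sin.comp (continuous_id.div_const 2)).abs.tendsto u₀).comp hu).eventually
      (eventually_gt_nhds (half_lt_self hc))
  have hbound : Tendsto (fun a => 2 / c * (1 / (N a : ℝ))) l (𝓝 0) := by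
    simpa using (tendsto_one_div_atTop_nhds_zero_nat.comp hN).const_mul (2 / c)
  refine squeeze_zero_norm' ?_ hbound
  filter_upwards [hsin, hN.eventually_ge_atTop 1] with a hsin_a hN_pos
  calc ‖2 * π / N a * sn (N a) (u a)‖ ≤ 1 / (N a * |sin (u a / 2)|) :=
        abs_two_pi_div_mul_sn_le _ (abs_pos.1 ((half_pos hc).trans hsin_a))
    _ ≤ 1 / (N a * (c / 2)) := by gcongr
    _ = 2 / c * (1 / N a) := by field_simp

lemma abs_prod_le_one {ι : Type*} [Fintype ι] {f : ι → ℝ} (hf : ∀ i, |f i| ≤ 1) :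
    |∏ i, f i| ≤ 1 := by
  rw [Finset.abs_prod]
  exact Finset.prod_le_one (fun i _ => abs_nonneg _) fun i _ => hf i

lemma tendsto_prod_zero_of_abs_le_one {ι α : Type*} [Fintype ι] {l : Filter α}
    {f : α → ι → ℝ} (hf : ∀ a i, |f a i| ≤ 1) (i₀ : ι)
    (h : Tendsto (fun a => f a i₀) l (𝓝 0)) : Tendsto (fun a => ∏ i, f a i) l (𝓝 0) := by
  classical
  refine squeeze_zero_norm (fun a => ?_) (tendsto_zero_iff_norm_tendsto_zero.1 h)
  rw [Real.norm_eq_abs, Real.norm_eq_abs, Finset.abs_prod,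
    ← Finset.mul_prod_erase _ _ (Finset.mem_univ i₀)]
  exact mul_le_of_le_one_right (abs_nonneg _)
    (Finset.prod_le_one (fun i _ => abs_nonneg _) fun i _ => hf a i)

lemma addHaar_preimage_linearMap_singleton {E : Type*} [NormedAddCommGroup E]
    [NormedSpace ℝ E] [MeasurableSpace E] [BorelSpace E] [FiniteDimensional ℝ E]
    (μ : Measure E) [μ.IsAddHaarMeasure] {L : E →ₗ[ℝ] ℝ} (hL : L ≠ 0) (c : ℝ) :
    μ (L ⁻¹' {c}) = 0 := by
  obtain ⟨p, rfl⟩ := LinearMap.surjective_iff_ne_zero.2 hL c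
  have : L ⁻¹' {L p} = (· + -p) ⁻¹' (LinearMap.ker L : Set E) := by
    ext x
    simp [← sub_eq_add_neg, sub_eq_zero]
  rw [this, measure_preimage_add_right]
  exact Measure.addHaar_submodule μ _ fun h => hL (LinearMap.ker_eq_top.1 h)

lemma ae_sin_half_sub_ne_zero (ι : Type*) [Fintype ι] :
    ∀ᵐ x : ι → ℝ, ∀ i j, i ≠ j → sin ((x i - x j) / 2) ≠ 0 := by
  classical
  refine ae_all_iff.2 fun i => ae_all_iff.2 fun j => ?_
  by_cases hij : i = j
  · exact .of_forall fun _ h => absurd hij h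
  let L : (ι → ℝ) →ₗ[ℝ] ℝ := (LinearMap.proj i : (ι → ℝ) →ₗ[ℝ] ℝ) - LinearMap.proj j
  have hL : L ≠ 0 := fun h => by
    simpa [L, Pi.single_eq_of_ne' hij] using LinearMap.congr_fun h (Pi.single i 1)
  have hlines : ∀ᵐ x : ι → ℝ, ∀ l : ℤ, L x ≠ 2 * l * π := ae_all_iff.2 fun l =>
    measure_mono_null (fun x hx => of_not_not hx)
      (addHaar_preimage_linearMap_singleton volume hL _)
  filter_upwards [hlines] with x hx _
  refine sin_ne_zero_iff.2 fun l hl => hx l ?_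
  simp only [L, LinearMap.sub_apply, LinearMap.proj_apply]
  linarith

lemma sin_half_add_two_pi_int_mul_ne_zero {u : ℝ} (hu : sin (u / 2) ≠ 0) (e : ℤ) :
    sin ((u + 2 * π * e) / 2) ≠ 0 := by
  rw [show (u + 2 * π * e) / 2 = u / 2 + e * π by ring, sin_add_int_mul_pi]
  exact mul_ne_zero (zpow_ne_zero _ (by norm_num)) hu

lemma yfun_sub_yfun {k : ℕ} (z η : Fin k → ℝ) (m n : ℕ) (x : Fin k → ℝ) (i j : Fin k) :
    yfun z η m n x i - yfun z η m n x j =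
      2 * π / (m * n) * (z i - z j) + (x j - x i + 2 * π * (η i - η j)) := by
  simp only [yfun]
  ring

lemma tendsto_yfun_sub_yfun {k : ℕ} (z η : Fin k → ℝ) (x : Fin k → ℝ) (i j : Fin k) :
    Tendsto (fun mn : ℕ × ℕ => yfun z η mn.1 mn.2 x i - yfun z η mn.1 mn.2 x j)
      (atTop ×ˢ atTop) (𝓝 (x j - x i + 2 * π * (η i - η j))) := by
  have hmn : Tendsto (fun mn : ℕ × ℕ => (mn.1 : ℝ) * mn.2) (atTop ×ˢ atTop) atTop :=
    (tendsto_natCast_atTop_atTop.comp tendsto_fst).atTop_mul_atTop₀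
      (tendsto_natCast_atTop_atTop.comp tendsto_snd)
  simp_rw [yfun_sub_yfun]
  simpa using ((tendsto_const_nhds.div_atTop hmn).mul_const (z i - z j)).add_const
    (x j - x i + 2 * π * (η i - η j))

/-- Let `σ, τ` be permutations of `{1,…,k}`, not both the identity, and fix `z ∈ ℝ^k`,
`η ∈ {0,1}^k`; set `y_i = (2π/(mn)) z_i − x_i + 2πη_i + π`. Then for Lebesgue-a.e.
`x ∈ [0,2π]^k` the product `Π_i (2π/m) s_m(x_i − x_{σ(i)}) · (2π/n) s_n(y_i − y_{τ(i)})`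
tends to `0` as `m, n → ∞`, and it is uniformly bounded by `1`. -/
theorem prod_perm_term_tendsto_zero (k : ℕ) (σ τ : Equiv.Perm (Fin k))
    (hστ : ¬(σ = 1 ∧ τ = 1)) (z η : Fin k → ℝ) (hη : ∀ i, η i = 0 ∨ η i = 1) :
    (∀ᵐ x ∂((volume : Measure (Fin k → ℝ)).restrict
        (Set.univ.pi fun _ : Fin k => Set.Icc (0 : ℝ) (2 * Real.pi))),
      Tendsto (fun mn : ℕ × ℕ =>
          ∏ i : Fin k,
            (2 * Real.pi / mn.1 * sn mn.1 (x i - x (σ i))) *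
              (2 * Real.pi / mn.2 *
                sn mn.2 (yfun z η mn.1 mn.2 x i - yfun z η mn.1 mn.2 x (τ i))))
        (atTop ×ˢ atTop) (nhds 0)) ∧
    ∀ m n : ℕ, 1 ≤ m → 1 ≤ n → ∀ x : Fin k → ℝ,
      |∏ i : Fin k,
          (2 * Real.pi / m * sn m (x i - x (σ i))) *
            (2 * Real.pi / n * sn n (yfun z η m n x i - yfun z η m n x (τ i)))| ≤ 1 := by
  have hfactor (n : ℕ) (u : ℝ) : |2 * π / n * sn n u| ≤ 1 := abs_two_pi_div_mul_sn_le_one n u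
  have hpair (m n : ℕ) (u v : ℝ) : |2 * π / m * sn m u * (2 * π / n * sn n v)| ≤ 1 := by
    rw [abs_mul]; exact mul_le_one₀ (hfactor m u) (abs_nonneg _) (hfactor n v)
  have hbdd {N : ℕ × ℕ → ℕ} (u : ℕ × ℕ → ℝ) : IsBoundedUnder (· ≤ ·) (atTop ×ˢ atTop)
      (norm ∘ fun mn => 2 * π / N mn * sn (N mn) (u mn)) :=
    isBoundedUnder_of ⟨1, fun mn => hfactor _ _⟩
  refine ⟨?_, fun m n _ _ x => abs_prod_le_one fun i => hpair m n _ _⟩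
  filter_upwards [ae_restrict_of_ae (ae_sin_half_sub_ne_zero (Fin k))] with x hx
  refine (not_and_or.mp hστ).elim (fun hσ => ?_) fun hτ => ?_
  · obtain ⟨i₀, hi₀⟩ := not_forall.1 fun h => hσ (Equiv.ext h)
    refine tendsto_prod_zero_of_abs_le_one (fun _ _ => hpair _ _ _ _) i₀ ?_
    exact (tendsto_two_pi_div_mul_sn_zero tendsto_fst tendsto_const_nhds
      (hx _ _ (Ne.symm hi₀))).zero_mul_isBoundedUnder_le (hbdd _)
  · obtain ⟨i₀, hi₀⟩ := not_forall.1 fun h => hτ (Equiv.ext h)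
    have hint (i : Fin k) : ∃ p : ℤ, η i = p :=
      (hη i).elim (fun h => ⟨0, by simp [h]⟩) fun h => ⟨1, by simp [h]⟩
    obtain ⟨p, hp⟩ := hint i₀
    obtain ⟨q, hq⟩ := hint (τ i₀)
    have hlim : sin ((x (τ i₀) - x i₀ + 2 * π * (η i₀ - η (τ i₀))) / 2) ≠ 0 := by
      simpa [hp, hq] using sin_half_add_two_pi_int_mul_ne_zero (hx _ _ hi₀) (p - q)
    refine tendsto_prod_zero_of_abs_le_one (fun _ _ => hpair _ _ _ _) i₀ ?_
    exact isBoundedUnder_le_mul_tendsto_zero (hbdd _)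
      (tendsto_two_pi_div_mul_sn_zero tendsto_snd (tendsto_yfun_sub_yfun z η x i₀ (τ i₀)) hlim)
end
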